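/- Lagrange inversion with a pole: let R be a commutative ring, let φ(λ) ∈ R[[λ]] be a formal power series whose constant term is invertible in R, and let ω ∈ R[[t]] be a formal power series with zero constant term satisfying ω = t·φ(ω). Let k ≥ 0 be an integer, let G(λ) ∈ R[[λ]] have invertible constant term, and set F(λ) = λ^{−k}·G(λ) (a formal Laurent series). Then, in the ring of formal Laurent series in t over R, F(ω)/(1 − t·φ′(ω)) = ∑_{n ≥ −k} a_n t^n, where a_n = [λ^n] F(λ)·φ(λ)^n. (Here F(ω) is well defined because ω equals t times a unit of R[[t]], so ω is invertible in the Laurent series ring; φ′ denotes the formal derivative; and [λ^n] denotes coefficient extraction.) -/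

import Mathlib

open scoped BigOperators

/-- Formal composition `f ∘ g` of power series; it agrees with genuine substitution
when `g` has zero constant term. -/
noncomputable def psComp {R : Type*} [CommRing R] (f g : PowerSeries R) : PowerSeries R :=
  PowerSeries.mk fun m =>
    ∑ j ∈ Finset.range (m + 1), PowerSeries.coeff (R := R) j f * PowerSeries.coeff (R := R) m (g ^ j)

/-- The formal derivative of a power series. -/
noncomputable def psDeriv {R : Type*} [CommRing R] (f : PowerSeries R) : PowerSeries R :=
  PowerSeries.mk fun m => ((m + 1 : ℕ) : R) * PowerSeries.coeff (R := R) (m + 1) f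


namespace LagAux

open PowerSeries Finset

variable {R : Type*} [CommRing R]

theorem psDeriv_eq (f : PowerSeries R) : psDeriv f = PowerSeries.derivativeFun f := by
  ext m
  change _ = coeff (R := R) m (PowerSeries.derivative R f)
  simp [psDeriv, PowerSeries.coeff_derivative, mul_comm]

theorem coeff_psDeriv (f : PowerSeries R) (m : ℕ) :
    PowerSeries.coeff (R := R) m (psDeriv f) = ((m+1 : ℕ) : R) * PowerSeries.coeff (R := R) (m+1) f := by
  simp [psDeriv]

theorem psDeriv_add (f g : PowerSeries R) : psDeriv (f + g) = psDeriv f + psDeriv g := by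
  simp [psDeriv_eq, PowerSeries.derivativeFun_add]

theorem psDeriv_mul (f g : PowerSeries R) :
    psDeriv (f * g) = psDeriv f * g + f * psDeriv g := by
  simp [psDeriv_eq, PowerSeries.derivativeFun_mul]; ring

theorem psDeriv_one : psDeriv (1 : PowerSeries R) = 0 := by
  simp [psDeriv_eq, PowerSeries.derivativeFun_one]

theorem psDeriv_C (r : R) : psDeriv (PowerSeries.C (R := R) r) = 0 := by
  rw [psDeriv_eq]; exact PowerSeries.derivative_C

theorem psDeriv_X : psDeriv (PowerSeries.X : PowerSeries R) = 1 := by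
  have : (PowerSeries.X : PowerSeries R).derivativeFun = 1 := PowerSeries.derivative_X
  simp [psDeriv_eq, this]

theorem psDeriv_pow (f : PowerSeries R) (n : ℕ) :
    psDeriv (f ^ n) = (n : PowerSeries R) * f ^ (n - 1) * psDeriv f := by
  induction n with
  | zero => simp [psDeriv_one]
  | succ n ih =>
    rcases Nat.eq_zero_or_pos n with h | h
    · subst h; simp [psDeriv_one]
    · rw [pow_succ, psDeriv_mul, ih]
      have h1 : n - 1 + 1 = n := Nat.succ_pred_eq_of_pos h
      push_cast [Nat.add_sub_cancel]
      rw [← h1, pow_succ]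
      push_cast [h1]
      ring


open PowerSeries Finset

variable {ω : PowerSeries R}

theorem coeff_psComp (f ω : PowerSeries R) (m : ℕ) :
    coeff (R := R) m (psComp f ω) = ∑ j ∈ range (m + 1), coeff (R := R) j f * coeff (R := R) m (ω ^ j) := by
  simp [psComp]

variable {ω : PowerSeries R}

theorem coeff_pow_eq_zero (hω0 : constantCoeff (R := R) ω = 0) {m j : ℕ} (h : m < j) :
    coeff (R := R) m (ω ^ j) = 0 := by
  have hx : (PowerSeries.X : PowerSeries R) ^ j ∣ ω ^ j :=
    pow_dvd_pow_of_dvd (PowerSeries.X_dvd_iff.2 hω0) j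
  exact PowerSeries.X_pow_dvd_iff.1 hx m h

theorem coeff_psComp_sum (hω0 : constantCoeff (R := R) ω = 0) (f : PowerSeries R) {m N : ℕ}
    (h : m < N) :
    coeff (R := R) m (psComp f ω) =
      coeff (R := R) m (∑ j ∈ range N, PowerSeries.C (R := R) (coeff (R := R) j f) * ω ^ j) := by
  rw [coeff_psComp, map_sum]
  simp only [PowerSeries.coeff_C_mul]
  apply Finset.sum_subset
  · exact Finset.range_subset_range.2 h
  · intro j hj hj'
    simp only [Finset.mem_range, not_lt] at hj'
    rw [coeff_pow_eq_zero hω0 hj', mul_zero]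

theorem psComp_add (f g : PowerSeries R) :
    psComp (f + g) ω = psComp f ω + psComp g ω := by
  ext m
  simp [coeff_psComp, add_mul, Finset.sum_add_distrib]

theorem psComp_one : psComp (1 : PowerSeries R) ω = 1 := by
  ext m
  rw [coeff_psComp]
  rw [Finset.sum_eq_single 0]
  · simp
  · intro j hj hj0
    simp [PowerSeries.coeff_one, hj0]
  · simp

theorem psComp_C (a : R) : psComp (PowerSeries.C (R := R) a) ω = PowerSeries.C (R := R) a := by
  ext m
  rw [coeff_psComp]
  rw [Finset.sum_eq_single 0]
  · simp [PowerSeries.coeff_C]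
  · intro j hj hj0
    simp [PowerSeries.coeff_C, hj0]
  · simp

theorem psComp_X (hω0 : constantCoeff (R := R) ω = 0) : psComp (PowerSeries.X : PowerSeries R) ω = ω := by
  ext m
  rw [coeff_psComp]
  rw [Finset.sum_eq_single 1]
  · rcases Nat.eq_zero_or_pos m with h | h
    · subst h
      simp [coeff_pow_eq_zero hω0 (by norm_num : (0:ℕ) < 1), hω0]
    · simp
  · intro j hj hj1
    simp [PowerSeries.coeff_X, hj1]
  · intro h1
    simp only [Finset.mem_range, not_lt] at h1
    have hm0 : m = 0 := by omega
    subst hm0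
    simp [PowerSeries.coeff_zero_eq_constantCoeff, hω0]

theorem psComp_mul (hω0 : constantCoeff (R := R) ω = 0) (f g : PowerSeries R) :
    psComp (f * g) ω = psComp f ω * psComp g ω := by
  ext m
  set S : PowerSeries R → PowerSeries R := fun h =>
    ∑ j ∈ range (m+1), PowerSeries.C (R := R) (coeff (R := R) j h) * ω ^ j with hS
  have hRHS : coeff (R := R) m (psComp f ω * psComp g ω) = coeff (R := R) m (S f * S g) := by
    rw [PowerSeries.coeff_mul, PowerSeries.coeff_mul]
    apply Finset.sum_congr rfl
    intro p hp
    rw [Finset.HasAntidiagonal.mem_antidiagonal] at hp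
    rw [coeff_psComp_sum hω0 f (Nat.lt_succ_of_le (le_trans (Nat.le_add_right _ _) hp.le)),
      coeff_psComp_sum hω0 g (Nat.lt_succ_of_le (le_trans (Nat.le_add_left _ _) hp.le))]
  rw [hRHS, coeff_psComp_sum hω0 (f*g) (Nat.lt_succ_self m)]
  have hSfg : S f * S g =
      ∑ j ∈ range (m+1), ∑ l ∈ range (m+1),
        PowerSeries.C (R := R) (coeff (R := R) j f * coeff (R := R) l g) * ω ^ (j + l) := by
    rw [hS, Finset.sum_mul_sum]
    apply Finset.sum_congr rfl; intro j _
    apply Finset.sum_congr rfl; intro l _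
    rw [map_mul, pow_add]; ring
  rw [hSfg]
  -- now both sides as sums of scalars
  simp only [map_sum, PowerSeries.coeff_C_mul]
  -- LHS: ∑_{s ≤ m} (fg)_s * coeff m (ω^s)
  have hL : ∀ s ∈ range (m+1), coeff (R := R) s (f * g) * coeff (R := R) m (ω ^ s) =
      ∑ p ∈ Finset.HasAntidiagonal.antidiagonal s, (coeff (R := R) p.1 f * coeff (R := R) p.2 g) * coeff (R := R) m (ω ^ (p.1 + p.2)) := by
    intro s hs
    rw [PowerSeries.coeff_mul, Finset.sum_mul]
    apply Finset.sum_congr rfl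
    intro p hp
    rw [Finset.HasAntidiagonal.mem_antidiagonal] at hp
    rw [hp]
  rw [Finset.sum_congr rfl hL]
  set F : ℕ × ℕ → R := fun p => (coeff (R := R) p.1 f * coeff (R := R) p.2 g) * coeff (R := R) m (ω ^ (p.1 + p.2)) with hF
  have hdisj : (↑(range (m+1)) : Set ℕ).PairwiseDisjoint (fun s => (Finset.HasAntidiagonal.antidiagonal s : Finset (ℕ × ℕ))) := by
    intro s _ t _ hst
    simp only [Function.onFun, Finset.disjoint_left]
    intro p hp hq
    rw [Finset.HasAntidiagonal.mem_antidiagonal] at hp hq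
    exact hst (hp ▸ hq ▸ rfl)
  rw [← Finset.sum_biUnion hdisj, ← Finset.sum_product']
  apply Finset.sum_subset
  · intro p hp
    rw [Finset.mem_biUnion] at hp
    obtain ⟨s, hs, hp⟩ := hp
    rw [Finset.HasAntidiagonal.mem_antidiagonal] at hp
    rw [Finset.mem_range] at hs
    rw [Finset.mem_product, Finset.mem_range, Finset.mem_range]
    constructor
    · exact lt_of_le_of_lt (hp ▸ Nat.le_add_right _ _) hs
    · exact lt_of_le_of_lt (hp ▸ Nat.le_add_left _ _) hs
  · intro p _ hp
    have : m < p.1 + p.2 := by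
      by_contra hle
      push_neg at hle
      exact hp (Finset.mem_biUnion.2 ⟨p.1 + p.2, Finset.mem_range.2 (Nat.lt_succ_of_le hle),
        Finset.HasAntidiagonal.mem_antidiagonal.2 rfl⟩)
    rw [coeff_pow_eq_zero hω0 this, mul_zero]

theorem psComp_pow (hω0 : constantCoeff (R := R) ω = 0) (f : PowerSeries R) (n : ℕ) :
    psComp (f ^ n) ω = psComp f ω ^ n := by
  induction n with
  | zero => simpa using psComp_one (ω := ω)
  | succ n ih => rw [pow_succ, psComp_mul hω0, ih, pow_succ]

theorem psSplit (f : PowerSeries R) (N : ℕ) :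
    f = (∑ i ∈ range N, PowerSeries.C (R := R) (coeff (R := R) i f) * PowerSeries.X ^ i)
      + PowerSeries.X ^ N * PowerSeries.mk (fun i => coeff (R := R) (N + i) f) := by
  ext d
  rw [map_add, map_sum]
  simp only [PowerSeries.coeff_C_mul, PowerSeries.coeff_X_pow, mul_ite, mul_one, mul_zero]
  rw [Finset.sum_ite_eq (range N) d]
  rw [PowerSeries.coeff_X_pow_mul']
  by_cases h : d < N
  · rw [if_pos (Finset.mem_range.2 h), if_neg (by omega), add_zero]
  · rw [if_neg (by simpa using h), if_pos (by omega), zero_add, PowerSeries.coeff_mk]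
    have hd : N + (d - N) = d := by omega
    rw [hd]

theorem psComp_zero : psComp (0 : PowerSeries R) ω = 0 := by
  ext m; simp [coeff_psComp]

theorem psComp_sum {ι : Type*} (s : Finset ι) (g : ι → PowerSeries R) :
    psComp (∑ i ∈ s, g i) ω = ∑ i ∈ s, psComp (g i) ω := by
  classical
  induction s using Finset.induction with
  | empty => simp [psComp_zero]
  | insert _ _ h ih => rw [Finset.sum_insert h, Finset.sum_insert h, psComp_add, ih]

theorem psComp_natCast (n : ℕ) : psComp ((n : ℕ) : PowerSeries R) ω = (n : PowerSeries R) := by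
  rw [← map_natCast (PowerSeries.C (R := R)) n, psComp_C]

theorem X_pow_dvd_psComp (hω0 : constantCoeff (R := R) ω = 0) {j : ℕ} {f : PowerSeries R}
    (h : PowerSeries.X ^ j ∣ f) : PowerSeries.X ^ j ∣ psComp f ω := by
  obtain ⟨t, rfl⟩ := h
  rw [psComp_mul hω0, psComp_pow hω0, psComp_X hω0]
  exact Dvd.dvd.mul_right (pow_dvd_pow_of_dvd (PowerSeries.X_dvd_iff.2 hω0) j) _

theorem psDeriv_sum {ι : Type*} (s : Finset ι) (g : ι → PowerSeries R) :
    psDeriv (∑ i ∈ s, g i) = ∑ i ∈ s, psDeriv (g i) := by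
  classical
  induction s using Finset.induction with
  | empty => ext m; simp [psDeriv]
  | insert _ _ h ih => rw [Finset.sum_insert h, Finset.sum_insert h, psDeriv_add, ih]

theorem psDeriv_psComp (hω0 : constantCoeff (R := R) ω = 0) (f : PowerSeries R) :
    psDeriv (psComp f ω) = psComp (psDeriv f) ω * psDeriv ω := by
  ext m
  set N := m + 2 with hN
  set S := ∑ i ∈ range N, PowerSeries.C (R := R) (coeff (R := R) i f) * PowerSeries.X ^ i with hS
  set T := PowerSeries.mk (fun i => coeff (R := R) (N + i) f) with hT
  have hsplit : f = S + PowerSeries.X ^ N * T := psSplit f N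
  have hL : coeff (R := R) m (psDeriv (psComp f ω)) = coeff (R := R) m (psDeriv (psComp S ω)) := by
    conv_lhs => rw [hsplit]
    rw [psComp_add, psDeriv_add, map_add]
    have hdvd : (PowerSeries.X : PowerSeries R) ^ N ∣ psComp (PowerSeries.X ^ N * T) ω :=
      X_pow_dvd_psComp hω0 (dvd_mul_right _ _)
    have h0 : coeff (R := R) m (psDeriv (psComp (PowerSeries.X ^ N * T) ω)) = 0 := by
      rw [coeff_psDeriv, PowerSeries.X_pow_dvd_iff.1 hdvd (m+1) (by omega), mul_zero]
    rw [h0, add_zero]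
  have hR : coeff (R := R) m (psComp (psDeriv f) ω * psDeriv ω) =
      coeff (R := R) m (psComp (psDeriv S) ω * psDeriv ω) := by
    conv_lhs => rw [hsplit]
    rw [psDeriv_add, psComp_add, add_mul, map_add]
    have hdvd : (PowerSeries.X : PowerSeries R) ^ (m+1) ∣
        psComp (psDeriv (PowerSeries.X ^ N * T)) ω * psDeriv ω := by
      apply Dvd.dvd.mul_right
      apply X_pow_dvd_psComp hω0
      rw [psDeriv_mul, psDeriv_pow, psDeriv_X]
      have h1 : (PowerSeries.X : PowerSeries R) ^ (m+1) ∣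
          (N : PowerSeries R) * PowerSeries.X ^ (N-1) * 1 * T := by
        apply Dvd.dvd.mul_right
        rw [mul_one]
        exact Dvd.dvd.mul_left (pow_dvd_pow _ (by omega)) _
      have h2 : (PowerSeries.X : PowerSeries R) ^ (m+1) ∣ PowerSeries.X ^ N * psDeriv T :=
        Dvd.dvd.mul_right (pow_dvd_pow _ (by omega)) _
      exact dvd_add h1 h2
    have h0 : coeff (R := R) m (psComp (psDeriv (PowerSeries.X ^ N * T)) ω * psDeriv ω) = 0 :=
      PowerSeries.X_pow_dvd_iff.1 hdvd m (by omega)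
    rw [h0, add_zero]
  rw [hL, hR]
  have hSmain : psDeriv (psComp S ω) = psComp (psDeriv S) ω * psDeriv ω := by
    rw [hS, psComp_sum, psDeriv_sum, psDeriv_sum, psComp_sum, Finset.sum_mul]
    apply Finset.sum_congr rfl
    intro i _
    rw [psComp_mul hω0, psComp_C, psComp_pow hω0, psComp_X hω0]
    rw [psDeriv_mul, psDeriv_C, zero_mul, zero_add, psDeriv_pow]
    rw [psDeriv_mul, psDeriv_C, zero_mul, zero_add, psDeriv_pow, psDeriv_X]
    rw [psComp_mul hω0, psComp_C, psComp_mul hω0, psComp_mul hω0, psComp_natCast,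
      psComp_pow hω0, psComp_X hω0, psComp_one]
    ring
  rw [hSmain]

theorem psDeriv_map {S : Type*} [CommRing S] (ε : R →+* S) (g : PowerSeries R) :
    PowerSeries.map ε (psDeriv g) = psDeriv (PowerSeries.map ε g) := by
  ext n
  simp [coeff_psDeriv, PowerSeries.coeff_map]

/-- The universal identity: `[x^{m-1}] (v' v^{m-1}) = [x^m] (v^m)`. -/
theorem univ_coeff (v : PowerSeries R) {m : ℕ} (hm : 1 ≤ m) :
    coeff (R := R) (m-1) (psDeriv v * v ^ (m-1)) = coeff (R := R) m (v ^ m) := by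
  classical
  set T := MvPolynomial ℕ ℤ
  set V : PowerSeries T := PowerSeries.mk fun i => MvPolynomial.X i with hV
  have key : PowerSeries.coeff (R := T) (m-1) (psDeriv V * V ^ (m-1)) =
      PowerSeries.coeff (R := T) m (V ^ m) := by
    have h1 : psDeriv (V ^ m) = ((m : ℕ) : PowerSeries T) * V ^ (m-1) * psDeriv V :=
      psDeriv_pow V m
    have h2 : PowerSeries.coeff (R := T) (m-1) (psDeriv (V ^ m)) =
        ((m : ℕ) : T) * PowerSeries.coeff (R := T) m (V ^ m) := by
      rw [coeff_psDeriv]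
      have : m - 1 + 1 = m := by omega
      rw [this]
    have h3 : PowerSeries.coeff (R := T) (m-1) (((m : ℕ) : PowerSeries T) * (V ^ (m-1) * psDeriv V)) =
        ((m : ℕ) : T) * PowerSeries.coeff (R := T) (m-1) (V ^ (m-1) * psDeriv V) := by
      rw [← map_natCast (PowerSeries.C (R := T)) m, PowerSeries.coeff_C_mul]
    have hm0 : ((m : ℕ) : T) ≠ 0 := Nat.cast_ne_zero.mpr (by omega)
    have := h2
    rw [h1, mul_assoc] at this
    rw [h3] at this
    have hkey := mul_left_cancel₀ hm0 this.symm
    rw [mul_comm (V ^ (m-1)) (psDeriv V)] at hkey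
    exact hkey.symm
  set ε : T →+* R := (MvPolynomial.eval₂Hom (Int.castRingHom R) fun i => coeff (R := R) i v) with hε
  have hmap : PowerSeries.map ε V = v := by
    ext i
    rw [PowerSeries.coeff_map, hV, PowerSeries.coeff_mk, hε]
    exact MvPolynomial.eval₂Hom_X' _ _ _
  have hMm : PowerSeries.map ε (psDeriv V * V ^ (m-1)) = psDeriv v * v ^ (m-1) := by
    rw [map_mul, map_pow, psDeriv_map, hmap]
  have hMm2 : PowerSeries.map ε (V ^ m) = v ^ m := by rw [map_pow, hmap]
  rw [← hMm, ← hMm2, PowerSeries.coeff_map, PowerSeries.coeff_map, key]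

section Main

variable {φ φinv : PowerSeries R}
  (hφinv : φ * φinv = 1)
  (hω0 : constantCoeff (R := R) ω = 0)
  (hω : ω = PowerSeries.X * psComp φ ω)

theorem huρ (hφinv : φ * φinv = 1) (hω0 : constantCoeff (R := R) ω = 0) :
    psComp φ ω * psComp φinv ω = 1 := by
  rw [← psComp_mul hω0, hφinv, psComp_one]

/-- Jacobi residue lemma, power series form. -/
theorem jac (hφinv : φ * φinv = 1) (hω0 : constantCoeff (R := R) ω = 0)
    (hω : ω = PowerSeries.X * psComp φ ω) (j : ℕ) :
    coeff (R := R) j (psDeriv ω * (psComp φinv ω) ^ (j+1)) = if j = 0 then 1 else 0 := by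
  set u := psComp φ ω with hu
  set ρ := psComp φinv ω with hρ
  have huρ1 : u * ρ = 1 := huρ hφinv hω0
  have hω' : psDeriv ω = u + PowerSeries.X * psDeriv u := by
    conv_lhs => rw [hω]
    rw [psDeriv_mul, psDeriv_X, one_mul]
  have hone : psDeriv u * ρ + u * psDeriv ρ = 0 := by
    have := congrArg psDeriv huρ1
    rwa [psDeriv_mul, psDeriv_one] at this
  have hmain : psDeriv ω * ρ ^ (j+1) = ρ ^ j + PowerSeries.X * (psDeriv u * ρ ^ (j+1)) := by
    rw [hω']
    have h2 : u * ρ ^ (j+1) = ρ ^ j := by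
      rw [pow_succ, ← mul_assoc, mul_comm u (ρ ^ j), mul_assoc, huρ1, mul_one]
    linear_combination h2
  rw [hmain, map_add]
  rcases Nat.eq_zero_or_pos j with hj | hj
  · subst hj
    simp [PowerSeries.coeff_zero_eq_constantCoeff]
  · obtain ⟨d, rfl⟩ : ∃ d, j = d + 1 := ⟨j - 1, by omega⟩
    rw [if_neg (by omega)]
    have hz : psDeriv u * ρ ^ (d+2) = -(psDeriv ρ * ρ ^ d) * (u * ρ) := by
      have h1 : psDeriv u * ρ = -(u * psDeriv ρ) := by linear_combination hone
      calc psDeriv u * ρ ^ (d+2) = (psDeriv u * ρ) * (ρ ^ d * ρ) := by ring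
        _ = -(u * psDeriv ρ) * (ρ ^ d * ρ) := by rw [h1]
        _ = -(psDeriv ρ * ρ ^ d) * (u * ρ) := by ring
    rw [hz, huρ1, mul_one, PowerSeries.coeff_succ_X_mul, map_neg]
    have hu2 : coeff (R := R) d (psDeriv ρ * ρ ^ d) = coeff (R := R) (d+1) (ρ ^ (d+1)) := by
      have := univ_coeff ρ (m := d + 1) (by omega)
      simpa using this
    rw [hu2]
    ring

/-- The key extraction lemma. -/
theorem keyext (hφinv : φ * φinv = 1) (hω0 : constantCoeff (R := R) ω = 0)
    (hω : ω = PowerSeries.X * psComp φ ω) (P : PowerSeries R) (m : ℕ) :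
    coeff (R := R) m (psComp P ω * (psDeriv ω * (psComp φinv ω) ^ (m+1))) = coeff (R := R) m P := by
  set u := psComp φ ω with hu
  set ρ := psComp φinv ω with hρ
  have huρ1 : u * ρ = 1 := huρ hφinv hω0
  have hterm : ∀ i ≤ m, coeff (R := R) m (PowerSeries.C (R := R) (coeff (R := R) i P) * ω ^ i *
      (psDeriv ω * ρ ^ (m+1))) = if i = m then coeff (R := R) m P else 0 := by
    intro i hile
    obtain ⟨e, rfl⟩ : ∃ e, m = i + e := ⟨m - i, by omega⟩
    have hωi : ω ^ i = PowerSeries.X ^ i * u ^ i := by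
      conv_lhs => rw [hω]
      rw [mul_pow]
    have hrw : PowerSeries.C (R := R) (coeff (R := R) i P) * ω ^ i * (psDeriv ω * ρ ^ (i+e+1)) =
        PowerSeries.X ^ i * (PowerSeries.C (R := R) (coeff (R := R) i P) *
          ((psDeriv ω * ρ ^ (e+1)) * (u * ρ) ^ i)) := by
      rw [hωi]
      have h3 : i + e + 1 = (e + 1) + i := by omega
      rw [h3, pow_add]
      ring
    rw [hrw, huρ1, one_pow, mul_one, PowerSeries.coeff_X_pow_mul',
      if_pos (by omega : i ≤ i + e), PowerSeries.coeff_C_mul]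
    have h4 : i + e - i = e := by omega
    rw [h4, jac hφinv hω0 hω e]
    by_cases hie : i = i + e
    · have he0 : e = 0 := by omega
      rw [if_pos hie, he0, if_pos rfl, mul_one]
      norm_num
    · rw [if_neg hie, if_neg (by omega), mul_zero]
  conv_lhs => rw [psSplit P (m+1)]
  rw [psComp_add, add_mul, map_add]
  have htail : coeff (R := R) m (psComp (PowerSeries.X ^ (m+1) *
      PowerSeries.mk (fun i => coeff (R := R) (m+1+i) P)) ω * (psDeriv ω * ρ ^ (m+1))) = 0 := by
    have hdvd : (PowerSeries.X : PowerSeries R) ^ (m+1) ∣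
        psComp (PowerSeries.X ^ (m+1) * PowerSeries.mk (fun i => coeff (R := R) (m+1+i) P)) ω *
          (psDeriv ω * ρ ^ (m+1)) :=
      Dvd.dvd.mul_right (X_pow_dvd_psComp hω0 (dvd_mul_right _ _)) _
    exact PowerSeries.X_pow_dvd_iff.1 hdvd m (by omega)
  rw [htail, add_zero, psComp_sum, Finset.sum_mul, map_sum]
  have hcongr : ∀ i ∈ range (m+1),
      coeff (R := R) m (psComp (PowerSeries.C (R := R) (coeff (R := R) i P) * PowerSeries.X ^ i) ω *
        (psDeriv ω * ρ ^ (m+1))) = if i = m then coeff (R := R) m P else 0 := by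
    intro i hi
    rw [Finset.mem_range] at hi
    rw [psComp_mul hω0, psComp_C, psComp_pow hω0, psComp_X hω0]
    exact hterm i (by omega)
  rw [Finset.sum_congr rfl hcongr, Finset.sum_ite_eq' (range (m+1)) m,
    if_pos (Finset.mem_range.2 (by omega))]

/-- The main power-series identity. -/
theorem star (hφinv : φ * φinv = 1) (hω0 : constantCoeff (R := R) ω = 0)
    (hω : ω = PowerSeries.X * psComp φ ω) (G : PowerSeries R) (k : ℕ) :
    PowerSeries.X ^ k * psComp G ω =
      (1 - PowerSeries.X * psComp (psDeriv φ) ω) * ω ^ k *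
        (psComp (G * φinv ^ k) ω * psDeriv ω * psComp φinv ω) := by
  set u := psComp φ ω with hu
  set ρ := psComp φinv ω with hρ
  set ψ := psComp (psDeriv φ) ω with hψ
  have huρ1 : u * ρ = 1 := huρ hφinv hω0
  have hchain : psDeriv u = ψ * psDeriv ω := psDeriv_psComp hω0 φ
  have hω' : psDeriv ω = u + PowerSeries.X * (ψ * psDeriv ω) := by
    conv_lhs => rw [hω]
    rw [psDeriv_mul, psDeriv_X, one_mul, hchain]
  have hunit : (1 - PowerSeries.X * ψ) * (psDeriv ω * ρ) = 1 := by
    have h1 : (1 - PowerSeries.X * ψ) * psDeriv ω = u := by linear_combination hω'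
    rw [← mul_assoc, h1, huρ1]
  have hQ : psComp (G * φinv ^ k) ω = psComp G ω * ρ ^ k := by
    rw [psComp_mul hω0, psComp_pow hω0]
  rw [hQ]
  have hωk : ω ^ k = PowerSeries.X ^ k * u ^ k := by
    conv_lhs => rw [hω]
    rw [mul_pow]
  rw [hωk]
  calc PowerSeries.X ^ k * psComp G ω
      = PowerSeries.X ^ k * psComp G ω * 1 * 1 := by ring
    _ = PowerSeries.X ^ k * psComp G ω * (u * ρ) ^ k *
        ((1 - PowerSeries.X * ψ) * (psDeriv ω * ρ)) := by rw [huρ1, hunit, one_pow]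
    _ = (1 - PowerSeries.X * ψ) * (PowerSeries.X ^ k * u ^ k) *
        (psComp G ω * ρ ^ k * psDeriv ω * ρ) := by ring

/-- Identification of the coefficients. -/
theorem coeff_B (hφinv : φ * φinv = 1) (hω0 : constantCoeff (R := R) ω = 0)
    (hω : ω = PowerSeries.X * psComp φ ω) (G : PowerSeries R) (k m : ℕ) :
    coeff (R := R) m (psComp (G * φinv ^ k) ω * psDeriv ω * psComp φinv ω) =
      coeff (R := R) ((((m : ℤ) - k) + k).toNat)
        (G * (if 0 ≤ (m : ℤ) - k then φ ^ ((m : ℤ) - k).toNat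
          else φinv ^ (-((m : ℤ) - k)).toNat)) := by
  set u := psComp φ ω with hu
  set ρ := psComp φinv ω with hρ
  set Q := G * φinv ^ k with hQdef
  have huρ1 : u * ρ = 1 := huρ hφinv hω0
  have htonat : (((m : ℤ) - k) + k).toNat = m := by omega
  rw [htonat]
  have hL : coeff (R := R) m (psComp Q ω * psDeriv ω * ρ) = coeff (R := R) m (Q * φ ^ m) := by
    have hk := keyext hφinv hω0 hω (Q * φ ^ m) m
    have heq : psComp (Q * φ ^ m) ω * (psDeriv ω * ρ ^ (m+1)) =
        psComp Q ω * psDeriv ω * ρ * (u * ρ) ^ m := by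
      rw [psComp_mul hω0, psComp_pow hω0, ← hu, pow_succ]
      ring
    rw [heq, huρ1, one_pow, mul_one] at hk
    exact hk
  rw [hL]
  by_cases hkm : 0 ≤ (m : ℤ) - k
  · rw [if_pos hkm]
    have h5 : ((m : ℤ) - k).toNat = m - k := by omega
    have h6 : m = (m - k) + k := by omega
    rw [h5]
    congr 1
    have h7 : φ ^ m = φ ^ (m - k) * φ ^ k := by
      rw [← pow_add, ← h6]
    calc Q * φ ^ m = G * φ ^ (m - k) * (φ * φinv) ^ k := by
          rw [hQdef, h7, mul_pow]
          ring
      _ = G * φ ^ (m - k) := by rw [hφinv, one_pow, mul_one]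
  · rw [if_neg hkm]
    have h5 : (-((m : ℤ) - k)).toNat = k - m := by omega
    have h6 : k = (k - m) + m := by omega
    rw [h5]
    congr 1
    have h7 : φinv ^ k = φinv ^ (k - m) * φinv ^ m := by
      rw [← pow_add, ← h6]
    calc Q * φ ^ m = G * φinv ^ (k - m) * (φ * φinv) ^ m := by
          rw [hQdef, h7, mul_pow]
          ring
      _ = G * φinv ^ (k - m) := by rw [hφinv, one_pow, mul_one]

end Main

end LagAux

/-- Lagrange inversion with a pole: let `φ ∈ R[[λ]]` have invertible
constant term (witnessed by the inverse power series `φinv`), let `ω ∈ R[[t]]` have zero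
constant term and satisfy `ω = t⋅φ(ω)`, let `G ∈ R[[λ]]` have invertible constant term
and `F(λ) = λ^{-k} G(λ)`.  Then, in the ring of formal Laurent series over `R`,
`F(ω)/(1 - t⋅φ′(ω)) = ∑_{n ≥ -k} a_n t^n` with `a_n = [λ^n] F(λ)φ(λ)^n`; equivalently
(multiplying through by the unit `ω^k (1 - t⋅φ′(ω))`),
`G(ω) = (1 - t⋅φ′(ω)) ⋅ ω^k ⋅ ∑_{n ≥ -k} a_n t^n`, which is the identity stated here,
with the Laurent series `∑_{n ≥ -k} a_n t^n` written as `t^{-k} ⋅ ∑_{m ≥ 0} a_{m-k} t^m`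
and `a_n = [λ^{n+k}] G(λ)φ(λ)^n` (using `φinv` to express negative powers of `φ`). -/
theorem lagrange_inversion_with_pole {R : Type*} [CommRing R]
    (φ φinv G ω : PowerSeries R)
    (hφinv : φ * φinv = 1)
    (hG : IsUnit (PowerSeries.constantCoeff (R := R) G))
    (hω0 : PowerSeries.constantCoeff (R := R) ω = 0)
    (hω : ω = PowerSeries.X * psComp φ ω)
    (k : ℕ)
    (a : ℤ → R)
    (ha : ∀ n : ℤ, -(k : ℤ) ≤ n →
      a n = PowerSeries.coeff (R := R) ((n + k).toNat)
          (G * (if 0 ≤ n then φ ^ n.toNat else φinv ^ (-n).toNat))) :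
    (HahnSeries.ofPowerSeries ℤ R) (psComp G ω) =
      (HahnSeries.ofPowerSeries ℤ R)
          ((1 - PowerSeries.X * psComp (psDeriv φ) ω) * ω ^ k) *
        ((HahnSeries.single (-1 : ℤ) (1 : R)) ^ k *
          (HahnSeries.ofPowerSeries ℤ R) (PowerSeries.mk fun m => a ((m : ℤ) - k))) := by

  have hA : (PowerSeries.mk fun m => a ((m : ℤ) - k)) =
      psComp (G * φinv ^ k) ω * psDeriv ω * psComp φinv ω := by
    ext m
    rw [PowerSeries.coeff_mk]
    exact (ha ((m : ℤ) - k) (by omega)).trans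
      (LagAux.coeff_B hφinv hω0 hω G k m).symm
  have hstar := LagAux.star hφinv hω0 hω G k
  have hι := congrArg (HahnSeries.ofPowerSeries ℤ R) hstar
  rw [map_mul, map_mul, map_pow, HahnSeries.ofPowerSeries_X] at hι
  rw [hA]
  have hs : (HahnSeries.single (-1 : ℤ) (1 : R)) ^ k *
      (HahnSeries.single (1 : ℤ) (1 : R)) ^ k = 1 := by
    rw [HahnSeries.single_pow, HahnSeries.single_pow, HahnSeries.single_mul_single]
    have h1 : (k • (-1 : ℤ)) + (k • (1 : ℤ)) = 0 := by simp
    rw [h1, one_pow, one_mul, HahnSeries.single_zero_one]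
  calc (HahnSeries.ofPowerSeries ℤ R) (psComp G ω)
      = ((HahnSeries.single (-1 : ℤ) (1 : R)) ^ k *
          (HahnSeries.single (1 : ℤ) (1 : R)) ^ k) *
          (HahnSeries.ofPowerSeries ℤ R) (psComp G ω) := by rw [hs, one_mul]
    _ = (HahnSeries.single (-1 : ℤ) (1 : R)) ^ k *
          ((HahnSeries.single (1 : ℤ) (1 : R)) ^ k *
            (HahnSeries.ofPowerSeries ℤ R) (psComp G ω)) := by ring
    _ = (HahnSeries.single (-1 : ℤ) (1 : R)) ^ k *
          ((HahnSeries.ofPowerSeries ℤ R)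
              ((1 - PowerSeries.X * psComp (psDeriv φ) ω) * ω ^ k) *
            (HahnSeries.ofPowerSeries ℤ R)
              (psComp (G * φinv ^ k) ω * psDeriv ω * psComp φinv ω)) := by rw [hι]
    _ = (HahnSeries.ofPowerSeries ℤ R)
            ((1 - PowerSeries.X * psComp (psDeriv φ) ω) * ω ^ k) *
        ((HahnSeries.single (-1 : ℤ) (1 : R)) ^ k *
          (HahnSeries.ofPowerSeries ℤ R)
            (psComp (G * φinv ^ k) ω * psDeriv ω * psComp φinv ω)) := by ring
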